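/- Let A⁰, A¹, …, A^K be nonempty finite sets and w₁, …, w_K nonnegative reals summing to 1. Define F̂(A⁰) = Σₖ wₖ F(A⁰; Aᵏ) and sd(F̂(A⁰)) = √(Σₖ wₖ (F(A⁰; Aᵏ) − F̂(A⁰))²). Then for any nonempty finite set A*, sd(F̂(A⁰)) ≤ √(6 Σₖ wₖ |A* ∆ Aᵏ|/|A*|), where F(A; B) = 2|A ∩ B|/(|A| + |B|). -/

import Mathlib

/-!
A weighted variance is at most the weighted mean squared deviation from any point, here from
`F(A⁰; A*)`. The Dice coefficient is Lipschitz in its second argument,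
`|F(A; B) - F(A; C)| ≤ 3 |B ∆ C| / (|A| + |C|)`, and since its values lie in `[0, 1]` the square
of such a difference is bounded by the difference itself.
-/

open scoped symmDiff
open Finset

lemma abs_div_sub_div_le {p q s t : ℝ} (hs : 0 < s) (ht : 0 < t) :
    |p / s - q / t| ≤ (|p - q| + |p / s| * |s - t|) / t := by
  have key : p / s - q / t = ((p - q) + p / s * (t - s)) / t := by
    field_simp; ring
  rw [key, abs_div, abs_of_pos ht, abs_sub_comm s t, ← abs_mul]
  gcongr
  exact abs_add_le _ _

lemma sum_mul_sq_sub_wmean_le {ι : Type*} {s : Finset ι} {w f : ι → ℝ} (hw1 : ∑ k ∈ s, w k = 1)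
    (c : ℝ) :
    ∑ k ∈ s, w k * (f k - ∑ j ∈ s, w j * f j) ^ 2 ≤ ∑ k ∈ s, w k * (f k - c) ^ 2 := by
  set μ := ∑ j ∈ s, w j * f j
  have h : ∑ k ∈ s, w k * (f k - c) ^ 2 =
      ∑ k ∈ s, w k * (f k - μ) ^ 2 + 2 * (μ - c) * μ - (μ ^ 2 - c ^ 2) * ∑ k ∈ s, w k := by
    simp only [μ, mul_sum, ← sum_add_distrib, ← sum_sub_distrib]
    exact sum_congr rfl fun k _ => by ring
  rw [h, hw1]
  nlinarith [sq_nonneg (μ - c)]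

section Dice

variable {α : Type*} [DecidableEq α]

lemma card_le_card_add_card_symmDiff (s t : Finset α) :
    #s ≤ #t + #(s ∆ t) :=
  calc #s ≤ #(s ∆ t ∪ t) := card_le_card (le_symmDiff_sup_right s t)
    _ ≤ #t + #(s ∆ t) := (card_union_le _ _).trans_eq (add_comm _ _)

lemma abs_card_sub_card_le_card_symmDiff (s t : Finset α) :
    |(#s : ℝ) - #t| ≤ #(s ∆ t) := by
  have hs : (#s : ℝ) ≤ #t + #(s ∆ t) := mod_cast card_le_card_add_card_symmDiff s t
  have ht : (#t : ℝ) ≤ #s + #(s ∆ t) := by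
    rw [symmDiff_comm]; exact mod_cast card_le_card_add_card_symmDiff t s
  exact abs_sub_le_iff.2 ⟨by linarith, by linarith⟩

/-- The Dice coefficient `F(A; B)`. -/
noncomputable def dice (A B : Finset α) : ℝ :=
  2 * #(A ∩ B) / (#A + #B)

lemma dice_nonneg (A B : Finset α) : 0 ≤ dice A B := by
  unfold dice; positivity

lemma dice_le_one (A B : Finset α) : dice A B ≤ 1 := by
  have hA : #(A ∩ B) ≤ #A := card_le_card inter_subset_left
  have hB : #(A ∩ B) ≤ #B := card_le_card inter_subset_right
  exact div_le_one_of_le₀ (by norm_cast; omega) (by positivity)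

lemma abs_dice_sub_dice_le (A B C : Finset α) :
    |dice A B - dice A C| ≤ 3 * #(B ∆ C) / (#A + #C) := by
  obtain rfl | hA := A.eq_empty_or_nonempty
  · simp only [dice, empty_inter, card_empty, CharP.cast_eq_zero, mul_zero, zero_div, sub_self,
      abs_zero]
    positivity
  have hA' : (0 : ℝ) < #A := mod_cast hA.card_pos
  have hinter : |(#(A ∩ B) : ℝ) - #(A ∩ C)| ≤ #(B ∆ C) :=
    (abs_card_sub_card_le_card_symmDiff _ _).trans
      (mod_cast card_le_card (inf_symmDiff_distrib_left A B C ▸ inter_subset_right))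
  have hcard : |(#A : ℝ) + #B - (#A + #C)| ≤ #(B ∆ C) := by
    rw [add_sub_add_left_eq_sub]; exact abs_card_sub_card_le_card_symmDiff B C
  have hdice : |dice A B| ≤ 1 := by
    rw [abs_of_nonneg (dice_nonneg A B)]; exact dice_le_one A B
  calc |dice A B - dice A C|
      ≤ (|2 * (#(A ∩ B) : ℝ) - 2 * #(A ∩ C)| + |dice A B| * |(#A : ℝ) + #B - (#A + #C)|) /
          (#A + #C) := abs_div_sub_div_le (by positivity) (by positivity)
    _ ≤ (2 * #(B ∆ C) + 1 * #(B ∆ C)) / (#A + #C) := by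
      rw [← mul_sub, abs_mul, abs_two]
      gcongr
    _ = 3 * #(B ∆ C) / (#A + #C) := by ring

lemma sq_dice_sub_dice_le {A B : Finset α} (C : Finset α) (hB : B.Nonempty) :
    (dice A C - dice A B) ^ 2 ≤ 3 * (#(B ∆ C) / #B) := by
  have hB' : (0 : ℝ) < #B := mod_cast hB.card_pos
  have hle : |dice A C - dice A B| ≤ 1 :=
    abs_sub_le_iff.2 ⟨by linarith [dice_le_one A C, dice_nonneg A B],
      by linarith [dice_le_one A B, dice_nonneg A C]⟩
  calc (dice A C - dice A B) ^ 2 ≤ |dice A C - dice A B| := by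
        rw [← sq_abs]; exact pow_le_of_le_one (abs_nonneg _) hle two_ne_zero
    _ ≤ 3 * #(C ∆ B) / (#A + #B) := abs_dice_sub_dice_le A C B
    _ ≤ 3 * #(B ∆ C) / #B := by
        rw [symmDiff_comm]; gcongr; exact le_add_of_nonneg_left (by positivity)
    _ = 3 * (#(B ∆ C) / #B) := mul_div_assoc _ _ _

end Dice

theorem sd_Fhat_bound_general {α : Type*} [DecidableEq α] {K : ℕ}
    (A0 : Finset α) (A : Fin K → Finset α)
    (w : Fin K → ℝ) (hw : ∀ k, 0 ≤ w k) (hw1 : ∑ k, w k = 1)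
    (As : Finset α) (hs : As.Nonempty) :
    Real.sqrt (∑ k, w k *
        (2 * ((A0 ∩ A k).card : ℝ) / ((A0.card : ℝ) + ((A k).card : ℝ)) -
          ∑ j, w j * (2 * ((A0 ∩ A j).card : ℝ) / ((A0.card : ℝ) + ((A j).card : ℝ)))) ^ 2) ≤
      Real.sqrt (6 * ∑ k, w k * (((As ∆ A k).card : ℝ) / (As.card : ℝ))) := by
  apply Real.sqrt_le_sqrt
  calc ∑ k, w k * (dice A0 (A k) - ∑ j, w j * dice A0 (A j)) ^ 2
      ≤ ∑ k, w k * (dice A0 (A k) - dice A0 As) ^ 2 := sum_mul_sq_sub_wmean_le hw1 _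
    _ ≤ ∑ k, w k * (3 * (#(As ∆ A k) / #As)) :=
        sum_le_sum fun k _ => mul_le_mul_of_nonneg_left (sq_dice_sub_dice_le _ hs) (hw k)
    _ ≤ 6 * ∑ k, w k * (#(As ∆ A k) / #As) := by
        rw [mul_sum]
        refine sum_le_sum fun k _ => ?_
        have : 0 ≤ w k * (#(As ∆ A k) / #As : ℝ) := mul_nonneg (hw k) (by positivity)
        linarith

theorem sd_Fhat_bound {α : Type*} [DecidableEq α] {K : ℕ}
    (A0 : Finset α) (A : Fin K → Finset α)
    (h0 : A0.Nonempty) (hA : ∀ k, (A k).Nonempty)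
    (w : Fin K → ℝ) (hw : ∀ k, 0 ≤ w k) (hw1 : ∑ k, w k = 1)
    (As : Finset α) (hs : As.Nonempty) :
    Real.sqrt (∑ k, w k *
        (2 * ((A0 ∩ A k).card : ℝ) / ((A0.card : ℝ) + ((A k).card : ℝ)) -
          ∑ j, w j * (2 * ((A0 ∩ A j).card : ℝ) / ((A0.card : ℝ) + ((A j).card : ℝ)))) ^ 2) ≤
      Real.sqrt (6 * ∑ k, w k * (((As ∆ A k).card : ℝ) / (As.card : ℝ))) :=
  sd_Fhat_bound_general A0 A w hw hw1 As hs
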